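/- Let H be an index-two subgroup of a finite group B. Then the number of B-conjugacy classes meeting H is at least half the total number of B-conjugacy classes. -/

import Mathlib

open MulAction

private theorem normal_of_index_two'' {B : Type*} [Group B] (H : Subgroup B)
    (hH : H.index = 2) : H.Normal := by
  constructor
  intro h hh g
  rw [Subgroup.mul_mem_iff_of_index_two hH, Subgroup.mul_mem_iff_of_index_two hH,
    H.inv_mem_iff]
  tauto

private theorem fixed_card_le {B : Type*} [Group B] [Finite B] (H : Subgroup B) [H.Normal]
    (hH : H.index = 2) (g : ConjAct B) :
    Nat.card (fixedBy B g) ≤ 2 * Nat.card (fixedBy ↥H g) := by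
  set a := ConjAct.ofConjAct g with ha
  set C : Subgroup B := Subgroup.centralizer {a} with hC
  have hmem : ∀ x : B, x ∈ C ↔ g • x = x := by
    intro x
    rw [ConjAct.smul_def, mul_inv_eq_iff_eq_mul, Subgroup.mem_centralizer_iff]
    simp [eq_comm]
    exact Iff.rfl
  have h1 : fixedBy B g = (C : Set B) := by
    ext x
    rw [mem_fixedBy, SetLike.mem_coe, hmem]
  have e : fixedBy ↥H g ≃ ↥(H.subgroupOf C) :=
    { toFun := fun x => ⟨⟨(x.1 : B), (hmem _).mpr (by
        have := congrArg Subtype.val x.2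
        rwa [ConjAct.Subgroup.val_conj_smul] at this)⟩, x.1.2⟩
      invFun := fun y => ⟨⟨(y.1 : B), y.2⟩, by
        apply Subtype.ext
        rw [ConjAct.Subgroup.val_conj_smul]
        exact (hmem _).mp y.1.2⟩
      left_inv := fun x => by ext; rfl
      right_inv := fun y => by ext; rfl }
  have h2 : Nat.card (fixedBy ↥H g) = Nat.card (H.subgroupOf C) := Nat.card_congr e
  have h3 : Nat.card (fixedBy B g) = Nat.card C := by rw [h1]; rfl
  rw [h2, h3]
  have hidx : (H.subgroupOf C).index ≤ 2 := by
    have hdvd : H.relIndex C ∣ H.index := Subgroup.relIndex_dvd_index_of_normal H C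
    rw [hH] at hdvd
    exact Nat.le_of_dvd (by norm_num) hdvd
  calc Nat.card C = Nat.card (H.subgroupOf C) * (H.subgroupOf C).index :=
        (Subgroup.card_mul_index _).symm
    _ ≤ Nat.card (H.subgroupOf C) * 2 := Nat.mul_le_mul_left _ hidx
    _ = 2 * Nat.card (H.subgroupOf C) := Nat.mul_comm _ _

/-- If `H` is an index-two subgroup of a finite group `B`, then the number
of conjugacy classes of `B` meeting `H` is at least half the total number of conjugacy
classes of `B`. -/
theorem index_two_subgroup_classes (B : Type*) [Group B] [Finite B]
    (H : Subgroup B) (hH : H.index = 2) :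
    Nat.card (ConjClasses B) ≤
      2 * Nat.card { c : ConjClasses B // ∃ g ∈ c.carrier, g ∈ H } := by
  have hN : H.Normal := normal_of_index_two'' H hH
  classical
  cases nonempty_fintype B
  have e1 : Quotient (orbitRel (ConjAct B) B) ≃ ConjClasses B :=
    Quotient.congrRight fun a b =>
      Iff.of_eq (congrFun (congrFun ConjAct.orbitRel_conjAct a) b)
  have e2 : Quotient (orbitRel (ConjAct B) ↥H) ≃
      { c : ConjClasses B // ∃ g ∈ c.carrier, g ∈ H } := by
    refine Equiv.ofBijective (fun q => Quotient.liftOn q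
      (fun h => (⟨ConjClasses.mk (h : B),
        ⟨(h : B), ConjClasses.mem_carrier_iff_mk_eq.mpr rfl, h.2⟩⟩ :
        { c : ConjClasses B // ∃ g ∈ c.carrier, g ∈ H })) ?_) ⟨?_, ?_⟩
    · rintro h h' ⟨u, hu⟩
      apply Subtype.ext
      have : u • (h' : B) = (h : B) := by
        have := congrArg Subtype.val hu
        rwa [ConjAct.Subgroup.val_conj_smul] at this
      exact ConjClasses.mk_eq_mk_iff_isConj.mpr
        (ConjAct.mem_orbit_conjAct.mp ⟨u, this⟩)
    · intro q q'
      induction q using Quotient.inductionOn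
      induction q' using Quotient.inductionOn
      rename_i h h'
      intro hq
      have hc : IsConj (h : B) (h' : B) :=
        ConjClasses.mk_eq_mk_iff_isConj.mp (congrArg Subtype.val hq)
      obtain ⟨c, hc⟩ := isConj_iff.mp hc
      apply Quotient.sound
      refine ⟨ConjAct.toConjAct c⁻¹, ?_⟩
      apply Subtype.ext
      rw [ConjAct.Subgroup.val_conj_smul, ConjAct.smul_def, ConjAct.ofConjAct_toConjAct,
        ← hc]
      group
    · rintro ⟨c, g, hgc, hgH⟩
      refine ⟨Quotient.mk _ (⟨g, hgH⟩ : ↥H), ?_⟩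
      exact Subtype.ext (ConjClasses.mem_carrier_iff_mk_eq.mp hgc)
  have burnB := sum_card_fixedBy_eq_card_orbits_mul_card_group (ConjAct B) B
  have burnH := sum_card_fixedBy_eq_card_orbits_mul_card_group (ConjAct B) ↥H
  have key : ∀ u : ConjAct B,
      Fintype.card (fixedBy B u) ≤ 2 * Fintype.card (fixedBy ↥H u) := by
    intro u
    have := fixed_card_le H hH u
    rwa [Nat.card_eq_fintype_card, Nat.card_eq_fintype_card] at this
  have hsum : (∑ u : ConjAct B, Fintype.card (fixedBy B u)) ≤
      ∑ u : ConjAct B, 2 * Fintype.card (fixedBy ↥H u) :=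
    Finset.sum_le_sum fun u _ => key u
  rw [burnB, ← Finset.mul_sum, burnH] at hsum
  have hpos : 0 < Fintype.card (ConjAct B) := Fintype.card_pos
  have hmain : Fintype.card (Quotient (orbitRel (ConjAct B) B)) ≤
      2 * Fintype.card (Quotient (orbitRel (ConjAct B) ↥H)) := by
    apply Nat.le_of_mul_le_mul_right _ hpos
    calc Fintype.card (Quotient (orbitRel (ConjAct B) B)) * Fintype.card (ConjAct B)
        ≤ 2 * (Fintype.card (Quotient (orbitRel (ConjAct B) ↥H)) * Fintype.card (ConjAct B)) :=
          hsum
      _ = 2 * Fintype.card (Quotient (orbitRel (ConjAct B) ↥H)) * Fintype.card (ConjAct B) := by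
          ring
  rw [Nat.card_eq_fintype_card, Nat.card_eq_fintype_card, ← Fintype.card_congr e1,
    ← Fintype.card_congr e2]
  exact hmain
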